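/- If two RochetNet menus M1 and M2, both indexed by {0,1,...,K}, are ε-reducible, then they are ε-mode-connected; moreover, the continuous path connecting them can be taken piecewise linear with only five linear pieces. -/

import Mathlib

open MeasureTheory Finset

namespace RN

/-- A RochetNet menu: for each of the `K+1` option indices, an allocation in `[0,1]^n`
and a price. -/
abbrev Menu (n K : ℕ) := Fin (K + 1) → (Fin n → ℝ) × ℝ

/-- Inner product of a valuation and an allocation. -/
def dotp {n : ℕ} (v x : Fin n → ℝ) : ℝ := ∑ j, v j * x j

/-- A valid menu: allocations in `[0,1]^n`, nonnegative prices, default option `(0,0)`. -/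
def IsMenu {n K : ℕ} (M : Menu n K) : Prop :=
  (∀ k j, 0 ≤ (M k).1 j ∧ (M k).1 j ≤ 1) ∧ (∀ k, 0 ≤ (M k).2) ∧ M 0 = 0

/-- Utility of option `k` for valuation `v`. -/
def util {n K : ℕ} (M : Menu n K) (v : Fin n → ℝ) (k : Fin (K + 1)) : ℝ :=
  dotp v (M k).1 - (M k).2

/-- Price extracted at valuation `v`: the maximal price among utility-maximizing options. -/
noncomputable def price {n K : ℕ} (M : Menu n K) (v : Fin n → ℝ) : ℝ :=
  sSup {p : ℝ | ∃ k, (∀ k', util M v k' ≤ util M v k) ∧ p = (M k).2}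

/-- Option `k` is the buyer's selected option at `v`: it maximizes utility and, among
utility maximizers, has maximal price. -/
def Selected {n K : ℕ} (M : Menu n K) (v : Fin n → ℝ) (k : Fin (K + 1)) : Prop :=
  (∀ k', util M v k' ≤ util M v k) ∧ (M k).2 = price M v

/-- The set of valuations. -/
def V (n : ℕ) : Set (Fin n → ℝ) :=
  {v | (∀ j, 0 ≤ v j ∧ v j ≤ 1) ∧ ∑ j, v j ≤ 1}

/-- Expected revenue of menu `M` under valuation distribution `F`. -/
noncomputable def Rev {n K : ℕ} (F : Measure (Fin n → ℝ)) (M : Menu n K) : ℝ :=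
  ∫ v, price M v ∂F

/-- Option-wise convex combination `lam • M + (1 - lam) • M'` of two menus. -/
noncomputable def comb {n K : ℕ} (lam : ℝ) (M M' : Menu n K) : Menu n K :=
  fun k => (fun j => lam * (M k).1 j + (1 - lam) * (M' k).1 j,
            lam * (M k).2 + (1 - lam) * (M' k).2)

/-- `M` is `ε`-reducible: some subset `K'` of options containing the default option, of
cardinality at most `√(K+1)`, contains the buyer's selected option with probability
at least `1 - ε`. -/
def Reducible {n K : ℕ} (F : Measure (Fin n → ℝ)) (M : Menu n K) (ε : ℝ) : Prop :=
  ∃ K' : Finset (Fin (K + 1)), 0 ∈ K' ∧ (K'.card : ℝ) ≤ Real.sqrt (K + 1) ∧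
    (F {v | ∃ k ∈ K', Selected M v k}).toReal ≥ 1 - ε

/-- `M₁` and `M₂` are `ε`-mode-connected by a piecewise linear path with `pieces` linear
pieces, all whose menus are valid and have revenue at least `min (Rev M₁) (Rev M₂) - ε`. -/
def PLConnected {n K : ℕ} (F : Measure (Fin n → ℝ)) (M₁ M₂ : Menu n K) (ε : ℝ)
    (pieces : ℕ) : Prop :=
  ∃ P : Fin (pieces + 1) → Menu n K, P 0 = M₁ ∧ P (Fin.last pieces) = M₂ ∧
    (∀ i, IsMenu (P i)) ∧
    ∀ i : Fin pieces, ∀ lam ∈ Set.Icc (0 : ℝ) 1,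
      Rev F (comb lam (P i.castSucc) (P i.succ)) ≥ min (Rev F M₁) (Rev F M₂) - ε


/-!
If `K'₁` and `K'₂` witness the reducibility of `M₁` and `M₂`, then `#K'₁ * #K'₂ ≤ K + 1`, so
the indices can be reassigned by maps `σ₁`, `σ₂` fixing `K'₁` resp. `K'₂` such that every pair
in `K'₁ ×ˢ K'₂` is realized at a single index. The menu `Eᵢ = Mᵢ ∘ σᵢ` keeps the selected option
of `Mᵢ` wherever that option lies in `K'ᵢ`, and so does every convex combination of `Mᵢ` and
`Eᵢ`; since prices are at most `1`, revenue along the segment from `Mᵢ` to `Eᵢ` drops by at most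
the mass `ε` of the remaining valuations. The menus `E₁` and `E₂` share a selected option at
every valuation, so on the segment between them the price is at least the convex combination of
the two prices, and the revenue at least that of the two revenues.
-/

section Price

variable {n K : ℕ} {M : Menu n K} {v : Fin n → ℝ}

lemma finite_priceSet (M : Menu n K) (v : Fin n → ℝ) :
    {p : ℝ | ∃ k, (∀ k', util M v k' ≤ util M v k) ∧ p = (M k).2}.Finite :=
  (Set.finite_range fun k => (M k).2).subset fun _ ⟨k, _, hp⟩ => ⟨k, hp.symm⟩

lemma le_price {k : Fin (K + 1)} (hk : ∀ k', util M v k' ≤ util M v k) :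
    (M k).2 ≤ price M v :=
  le_csSup (finite_priceSet M v).bddAbove ⟨k, hk, rfl⟩

lemma exists_selected (M : Menu n K) (v : Fin n → ℝ) : ∃ k, Selected M v k := by
  obtain ⟨k, hk⟩ := Finite.exists_max (util M v)
  obtain ⟨k, hk, hp⟩ := Set.Nonempty.csSup_mem (by exact ⟨_, k, hk, rfl⟩) (finite_priceSet M v)
  exact ⟨k, hk, hp.symm⟩

lemma price_nonneg (hM : IsMenu M) (v : Fin n → ℝ) : 0 ≤ price M v := by
  obtain ⟨k, -, hk⟩ := exists_selected M v
  exact hk ▸ hM.2.1 k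

lemma price_le_sum (hM : IsMenu M) (v : Fin n → ℝ) : price M v ≤ ∑ k, (M k).2 := by
  obtain ⟨k, -, hk⟩ := exists_selected M v
  exact hk ▸ single_le_sum (fun k _ => hM.2.1 k) (mem_univ k)

lemma dotp_le_one {x : Fin n → ℝ} (hv : v ∈ V n) (hx : ∀ j, x j ≤ 1) : dotp v x ≤ 1 :=
  calc dotp v x ≤ ∑ j, v j := sum_le_sum fun j _ => mul_le_of_le_one_right (hv.1 j).1 (hx j)
    _ ≤ 1 := hv.2

/-- The default option gives the buyer utility `0`, so the price paid is at most `v ⬝ x ≤ 1`. -/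
lemma price_le_one (hM : IsMenu M) (hv : v ∈ V n) : price M v ≤ 1 := by
  obtain ⟨k, hk, hp⟩ := exists_selected M v
  have h0 : 0 ≤ dotp v (M k).1 - (M k).2 := by simpa [util, hM.2.2, dotp] using hk 0
  have hdot := dotp_le_one hv fun j => (hM.1 k j).2
  linarith

lemma Selected.congr {k m : Fin (K + 1)} (h : Selected M v k) (he : M m = M k) :
    Selected M v m := by
  simpa only [Selected, util, he] using h

lemma Selected.comp {k : Fin (K + 1)} {σ : Fin (K + 1) → Fin (K + 1)} (h : Selected M v k)
    (hσ : σ k = k) : Selected (fun m => M (σ m)) v k := by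
  have hmax : ∀ m, util M v (σ m) ≤ util M v (σ k) := fun m => by rw [hσ]; exact h.1 (σ m)
  refine ⟨hmax, le_antisymm (le_price hmax) ?_⟩
  obtain ⟨m, hm, hp⟩ := exists_selected (fun m => M (σ m)) v
  calc price (fun m => M (σ m)) v = (M (σ m)).2 := hp.symm
    _ ≤ price M v := le_price fun k' => (h.1 k').trans ((congrArg _ hσ).symm.le.trans (hm k))
    _ = (M (σ k)).2 := by rw [hσ, h.2]

end Price

section Comb

variable {n K : ℕ} {lam : ℝ} {A B : Menu n K}

lemma util_comb (lam : ℝ) (A B : Menu n K) (v : Fin n → ℝ) (k : Fin (K + 1)) :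
    util (comb lam A B) v k = lam * util A v k + (1 - lam) * util B v k := by
  have hdot : dotp v (comb lam A B k).1 = lam * dotp v (A k).1 + (1 - lam) * dotp v (B k).1 := by
    simp only [dotp, comb, mul_sum, ← sum_add_distrib]
    exact sum_congr rfl fun j _ => by ring
  rw [util, hdot]
  simp only [util, comb]
  ring

lemma comb_zero (A B : Menu n K) : comb 0 A B = B := by
  ext <;> simp [comb]

lemma comb_comm (lam : ℝ) (A B : Menu n K) : comb lam A B = comb (1 - lam) B A := by
  ext <;> simp only [comb] <;> ring

lemma IsMenu.comb (hA : IsMenu A) (hB : IsMenu B) (hlam : lam ∈ Set.Icc (0 : ℝ) 1) :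
    IsMenu (comb lam A B) := by
  obtain ⟨hl₀, hl₁⟩ := hlam
  have hl₁' : 0 ≤ 1 - lam := sub_nonneg.2 hl₁
  refine ⟨fun k j => ⟨?_, ?_⟩, fun k => ?_, ?_⟩
  · have := (hA.1 k j).1; have := (hB.1 k j).1
    dsimp only [RN.comb]; positivity
  · have := (hA.1 k j).2; have := (hB.1 k j).2
    dsimp only [RN.comb]; nlinarith
  · have := hA.2.1 k; have := hB.2.1 k
    dsimp only [RN.comb]; positivity
  · ext <;> simp [RN.comb, hA.2.2, hB.2.2]

lemma IsMenu.comp {M : Menu n K} (hM : IsMenu M) {σ : Fin (K + 1) → Fin (K + 1)}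
    (hσ : σ 0 = 0) : IsMenu fun m => M (σ m) :=
  ⟨fun k => hM.1 (σ k), fun k => hM.2.1 (σ k), (congrArg M hσ).trans hM.2.2⟩

/-- A common selected option of `A` and `B` remains utility-maximizing in every convex
combination. -/
lemma le_price_comb (hlam : lam ∈ Set.Icc (0 : ℝ) 1) {v : Fin n → ℝ} {m : Fin (K + 1)}
    (hA : Selected A v m) (hB : Selected B v m) :
    lam * price A v + (1 - lam) * price B v ≤ price (comb lam A B) v := by
  have hmax : ∀ k', util (comb lam A B) v k' ≤ util (comb lam A B) v m := fun k' => by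
    rw [util_comb, util_comb]
    exact add_le_add (mul_le_mul_of_nonneg_left (hA.1 k') hlam.1)
      (mul_le_mul_of_nonneg_left (hB.1 k') (sub_nonneg.2 hlam.2))
  simpa only [comb, hA.2, hB.2] using le_price hmax

end Comb

section Measurability

variable {n K : ℕ} {M : Menu n K}

lemma measurable_util (M : Menu n K) (k : Fin (K + 1)) :
    Measurable fun v : Fin n → ℝ => util M v k := by
  unfold util dotp
  fun_prop

lemma measurableSet_isMaxOn_util (M : Menu n K) (k : Fin (K + 1)) :
    MeasurableSet {v : Fin n → ℝ | ∀ k', util M v k' ≤ util M v k} := by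
  simp only [Set.ofPred_forall]
  exact .iInter fun k' => measurableSet_le (measurable_util M k') (measurable_util M k)

lemma measurableSet_V (n : ℕ) : MeasurableSet (V n) := by
  unfold V
  measurability

lemma price_eq_sup' (hM : IsMenu M) :
    price M = univ.sup' univ_nonempty fun k =>
      {v | ∀ k', util M v k' ≤ util M v k}.indicator fun _ => (M k).2 := by
  ext v
  rw [Finset.sup'_apply]
  refine le_antisymm ?_ (sup'_le _ _ fun k _ => ?_)
  · obtain ⟨k, hk, hp⟩ := exists_selected M v
    exact le_sup'_of_le _ (mem_univ k) (by rw [Set.indicator_of_mem (by exact hk), hp])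
  · rw [Set.indicator_apply]
    split_ifs with hk
    exacts [le_price hk, price_nonneg hM v]

lemma measurable_price (hM : IsMenu M) : Measurable (price M) := by
  rw [price_eq_sup' hM]
  exact Finset.measurable_sup' _ fun k _ =>
    measurable_const.indicator (measurableSet_isMaxOn_util M k)

lemma integrable_price (hM : IsMenu M) (F : Measure (Fin n → ℝ)) [IsFiniteMeasure F] :
    Integrable (price M) F :=
  .of_bound (measurable_price hM).aestronglyMeasurable _ <| .of_forall fun v => by
    rw [Real.norm_of_nonneg (price_nonneg hM v)]
    exact price_le_sum hM v

lemma measurableSet_selected (hM : IsMenu M) (K' : Finset (Fin (K + 1))) :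
    MeasurableSet {v : Fin n → ℝ | ∃ k ∈ K', Selected M v k} := by
  simp only [Selected, Set.ofPred_exists, Set.ofPred_and]
  exact .iUnion fun k => (MeasurableSet.const _).inter <| (measurableSet_isMaxOn_util M k).inter
    (measurableSet_eq_fun measurable_const (measurable_price hM))

end Measurability

section Revenue

variable {n K : ℕ} {F : Measure (Fin n → ℝ)} {M : Menu n K}

lemma rev_sub_le_setIntegral [IsProbabilityMeasure F] (hFV : F (V n) = 1) (hM : IsMenu M)
    {S : Set (Fin n → ℝ)} (hS : MeasurableSet S) {ε : ℝ} (hSF : 1 - ε ≤ (F S).toReal) :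
    Rev F M - ε ≤ ∫ v in S, price M v ∂F := by
  have hcompl : ∫ v in Sᶜ, price M v ∂F ≤ ε :=
    calc ∫ v in Sᶜ, price M v ∂F ≤ ∫ _ in Sᶜ, (1 : ℝ) ∂F :=
          setIntegral_mono_ae (integrable_price hM F).integrableOn (integrable_const 1).integrableOn
            (((ae_mem_iff_measure_eq (measurableSet_V n).nullMeasurableSet).2
              (by rw [hFV, measure_univ])).mono fun v hv => price_le_one hM hv)
      _ = 1 - (F S).toReal := by
          rw [setIntegral_const, measureReal_compl hS, probReal_univ, smul_eq_mul, mul_one]; rfl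
      _ ≤ ε := by linarith
  have := integral_add_compl hS (integrable_price hM F)
  unfold Rev
  linarith

lemma rev_sub_le_of_price_le_on [IsProbabilityMeasure F] (hFV : F (V n) = 1) (hM : IsMenu M)
    {C : Menu n K} (hC : IsMenu C) {S : Set (Fin n → ℝ)} (hS : MeasurableSet S) {ε : ℝ}
    (hSF : 1 - ε ≤ (F S).toReal) (hle : ∀ v ∈ S, price M v ≤ price C v) :
    Rev F M - ε ≤ Rev F C :=
  calc Rev F M - ε ≤ ∫ v in S, price M v ∂F := rev_sub_le_setIntegral hFV hM hS hSF
    _ ≤ ∫ v in S, price C v ∂F :=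
        setIntegral_mono_on (integrable_price hM F).integrableOn
          (integrable_price hC F).integrableOn hS hle
    _ ≤ Rev F C :=
        setIntegral_le_integral (integrable_price hC F) (.of_forall (price_nonneg hC))

lemma le_rev_comb [IsFiniteMeasure F] {lam : ℝ} (hlam : lam ∈ Set.Icc (0 : ℝ) 1)
    {A B : Menu n K} (hA : IsMenu A) (hB : IsMenu B)
    (hsel : ∀ v, ∃ m, Selected A v m ∧ Selected B v m) :
    lam * Rev F A + (1 - lam) * Rev F B ≤ Rev F (comb lam A B) := by
  have hIA := (integrable_price hA F).const_mul lam
  have hIB := (integrable_price hB F).const_mul (1 - lam)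
  unfold Rev
  rw [← integral_const_mul, ← integral_const_mul, ← integral_add hIA hIB]
  refine integral_mono (hIA.add hIB) (integrable_price (hA.comb hB hlam) F) fun v => ?_
  obtain ⟨m, hmA, hmB⟩ := hsel v
  exact le_price_comb hlam hmA hmB

end Revenue

section Combinatorics

variable {ι β : Type*} [Fintype ι] [DecidableEq ι] [DecidableEq β]

/-- The values missed by `f` on `s` are placed on distinct points outside `s`. -/
lemma exists_extend_surjOn (s : Finset ι) (t : Finset β) (f : ι → β) (hf : ∀ i ∈ s, f i ∈ t)
    {b₀ : β} (hb₀ : b₀ ∈ t) (hcard : #t ≤ #(s.image f) + #sᶜ) :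
    ∃ g : ι → β, (∀ i ∈ s, g i = f i) ∧ (∀ i, g i ∈ t) ∧ ∀ y ∈ t, ∃ i, g i = y := by
  set R := t \ s.image f
  have hR : Fintype.card R ≤ Fintype.card (sᶜ : Finset ι) := by
    have : s.image f ⊆ t := fun y hy => by
      obtain ⟨i, hi, rfl⟩ := mem_image.1 hy
      exact hf i hi
    simp only [Fintype.card_coe, R, card_sdiff_of_subset this]
    omega
  obtain ⟨θ⟩ := Function.Embedding.nonempty_of_card_le hR
  set e : R → ι := fun r => θ r
  have he : Function.Injective e := Subtype.val_injective.comp θ.injective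
  have he_notMem : ∀ i ∈ s, ¬∃ r, e r = i := fun i hi ⟨r, hr⟩ =>
    mem_compl.1 (hr ▸ (θ r).2) hi
  refine ⟨Function.extend e Subtype.val fun i => if i ∈ s then f i else b₀, fun i hi => ?_,
    fun i => ?_, fun y hy => ?_⟩
  · rw [Function.extend_apply' _ _ _ (he_notMem i hi), if_pos hi]
  · by_cases hi : ∃ r, e r = i
    · obtain ⟨r, rfl⟩ := hi
      rw [he.extend_apply]
      exact (mem_sdiff.1 r.2).1
    · rw [Function.extend_apply' _ _ _ hi]
      split_ifs with hs
      exacts [hf i hs, hb₀]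
  · by_cases hys : y ∈ s.image f
    · obtain ⟨i, hi, rfl⟩ := mem_image.1 hys
      exact ⟨i, by rw [Function.extend_apply' _ _ _ (he_notMem i hi), if_pos hi]⟩
    · exact ⟨e ⟨y, mem_sdiff.2 ⟨hy, hys⟩⟩, he.extend_apply _ _ _⟩

/-- Points of `A ∪ B` are sent to themselves in the coordinates where they belong and to `o`
in the others; this is injective on `A ∪ B` because `o` lies in both. The remaining points
are then used to cover the rest of `A ×ˢ B`. -/
lemma exists_pairing (A B : Finset ι) {o : ι} (hoA : o ∈ A) (hoB : o ∈ B)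
    (hcard : #A * #B ≤ Fintype.card ι) :
    ∃ σ₁ σ₂ : ι → ι, (∀ a ∈ A, σ₁ a = a) ∧ (∀ b ∈ B, σ₂ b = b) ∧
      ∀ i j, ∃ m, σ₁ m = σ₁ i ∧ σ₂ m = σ₂ j := by
  set φ : ι → ι × ι := fun d => (if d ∈ A then d else o, if d ∈ B then d else o)
  have hφ : ∀ d ∈ A ∪ B, φ d ∈ A ×ˢ B := fun d _ => by
    simp only [φ, mem_product]
    constructor <;> split_ifs <;> assumption
  have hinj : Set.InjOn φ ↑(A ∪ B) := by
    intro d hd d' hd' h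
    simp only [φ, Prod.mk.injEq, coe_union, Set.mem_union, mem_coe] at h hd hd'
    split_ifs at h <;> grind
  have hcard' : #(A ×ˢ B) ≤ #((A ∪ B).image φ) + #(A ∪ B)ᶜ := by
    rw [card_image_of_injOn hinj, card_add_card_compl, card_product]
    exact hcard
  obtain ⟨g, hgφ, hgt, hgsurj⟩ :=
    exists_extend_surjOn (A ∪ B) (A ×ˢ B) φ hφ (b₀ := (o, o)) (mem_product.2 ⟨hoA, hoB⟩) hcard'
  refine ⟨fun m => (g m).1, fun m => (g m).2, fun a ha => ?_, fun b hb => ?_, fun i j => ?_⟩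
  · simp [hgφ a (mem_union_left B ha), φ, ha]
  · simp [hgφ b (mem_union_right A hb), φ, hb]
  · obtain ⟨m, hm⟩ := hgsurj ((g i).1, (g j).2)
      (mem_product.2 ⟨(mem_product.1 (hgt i)).1, (mem_product.1 (hgt j)).2⟩)
    exact ⟨m, (congrArg Prod.fst hm :), (congrArg Prod.snd hm :)⟩

end Combinatorics

section Path

variable {n K : ℕ} {F : Measure (Fin n → ℝ)}

lemma rev_sub_le_rev_comb_comp [IsProbabilityMeasure F] (hFV : F (V n) = 1) {M : Menu n K}
    (hM : IsMenu M) {K' : Finset (Fin (K + 1))} {ε : ℝ}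
    (hK' : (F {v | ∃ k ∈ K', Selected M v k}).toReal ≥ 1 - ε) {σ : Fin (K + 1) → Fin (K + 1)}
    (hσ : ∀ k ∈ K', σ k = k) (hMσ : IsMenu fun m => M (σ m)) {lam : ℝ}
    (hlam : lam ∈ Set.Icc (0 : ℝ) 1) :
    Rev F M - ε ≤ Rev F (comb lam M fun m => M (σ m)) := by
  refine rev_sub_le_of_price_le_on hFV hM (hM.comb hMσ hlam) (measurableSet_selected hM K') hK'
    fun v ⟨k, hk, hsel⟩ => ?_
  have hselσ := hsel.comp (hσ k hk)
  have hprice : price (fun m => M (σ m)) v = price M v := by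
    rw [← hselσ.2, ← hsel.2]
    exact congrArg (fun m => (M m).2) (hσ k hk)
  have := le_price_comb hlam hsel hselσ
  rw [hprice] at this
  linarith

lemma exists_common_selected_comp {M₁ M₂ : Menu n K} {σ₁ σ₂ : Fin (K + 1) → Fin (K + 1)}
    (hpair : ∀ i j, ∃ m, σ₁ m = σ₁ i ∧ σ₂ m = σ₂ j) (v : Fin n → ℝ) :
    ∃ m, Selected (fun m => M₁ (σ₁ m)) v m ∧ Selected (fun m => M₂ (σ₂ m)) v m := by
  obtain ⟨i, hi⟩ := exists_selected (fun m => M₁ (σ₁ m)) v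
  obtain ⟨j, hj⟩ := exists_selected (fun m => M₂ (σ₂ m)) v
  obtain ⟨m, hm₁, hm₂⟩ := hpair i j
  exact ⟨m, hi.congr (congrArg M₁ hm₁), hj.congr (congrArg M₂ hm₂)⟩

/-- The path `M₁ → E₁ → E₂ → M₂` has three pieces; its last piece is run through three
times to obtain five. -/
lemma plConnected_of_bridge [IsFiniteMeasure F] {ε : ℝ} {M₁ E₁ E₂ M₂ : Menu n K}
    (hM₁ : IsMenu M₁) (hE₁ : IsMenu E₁) (hE₂ : IsMenu E₂) (hM₂ : IsMenu M₂)
    (h₁ : ∀ lam ∈ Set.Icc (0 : ℝ) 1, Rev F M₁ - ε ≤ Rev F (comb lam M₁ E₁))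
    (h₂ : ∀ lam ∈ Set.Icc (0 : ℝ) 1, Rev F M₂ - ε ≤ Rev F (comb lam M₂ E₂))
    (hE : ∀ v, ∃ m, Selected E₁ v m ∧ Selected E₂ v m) :
    PLConnected F M₁ M₂ ε 5 := by
  have h₂' : ∀ lam ∈ Set.Icc (0 : ℝ) 1, Rev F M₂ - ε ≤ Rev F (comb lam E₂ M₂) :=
    fun lam ⟨hl₀, hl₁⟩ => comb_comm lam E₂ M₂ ▸ h₂ _ ⟨sub_nonneg.2 hl₁, by linarith⟩
  set r := min (Rev F M₁) (Rev F M₂)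
  have hleft : r - ε ≤ Rev F M₁ - ε := sub_le_sub_right (min_le_left _ _) ε
  have hright : r - ε ≤ Rev F M₂ - ε := sub_le_sub_right (min_le_right _ _) ε
  have hmid : ∀ lam ∈ Set.Icc (0 : ℝ) 1, r - ε ≤ Rev F (comb lam E₁ E₂) := fun lam hlam => by
    have hR₁ := comb_zero M₁ E₁ ▸ h₁ 0 ⟨le_rfl, zero_le_one⟩
    have hR₂ := comb_zero M₂ E₂ ▸ h₂ 0 ⟨le_rfl, zero_le_one⟩
    have hl₀ := hlam.1
    have hl₁ := sub_nonneg.2 hlam.2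
    calc r - ε = lam * (r - ε) + (1 - lam) * (r - ε) := by ring
      _ ≤ lam * Rev F E₁ + (1 - lam) * Rev F E₂ := by
          gcongr
          exacts [hleft.trans hR₁, hright.trans hR₂]
      _ ≤ Rev F (comb lam E₁ E₂) := le_rev_comb hlam hE₁ hE₂ hE
  refine ⟨![M₁, E₁, E₂, M₂, E₂, M₂], rfl, rfl, fun i => ?_, fun i lam hlam => ?_⟩
  · fin_cases i <;> assumption
  · fin_cases i
    exacts [hleft.trans (h₁ lam hlam), hmid lam hlam, hright.trans (h₂' lam hlam),
      hright.trans (h₂ lam hlam), hright.trans (h₂' lam hlam)]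

end Path

/-- If two RochetNet menus `M₁`, `M₂` (indexed by `{0,…,K}`) are
`ε`-reducible, then they are `ε`-mode-connected via a piecewise linear path with five
linear pieces. -/
theorem statement4 {n K : ℕ} (F : Measure (Fin n → ℝ)) [IsProbabilityMeasure F]
    (hFV : F (V n) = 1) (ε : ℝ) (M₁ M₂ : Menu n K) (hM₁ : IsMenu M₁) (hM₂ : IsMenu M₂)
    (hr₁ : Reducible F M₁ ε) (hr₂ : Reducible F M₂ ε) :
    PLConnected F M₁ M₂ ε 5 := by
  obtain ⟨K'₁, h0₁, hc₁, hF₁⟩ := hr₁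
  obtain ⟨K'₂, h0₂, hc₂, hF₂⟩ := hr₂
  have hcard : #K'₁ * #K'₂ ≤ Fintype.card (Fin (K + 1)) := by
    have := mul_le_mul hc₁ hc₂ (Nat.cast_nonneg _) (Real.sqrt_nonneg _)
    rw [Real.mul_self_sqrt (by positivity)] at this
    rw [Fintype.card_fin]
    exact_mod_cast this
  obtain ⟨σ₁, σ₂, hσ₁, hσ₂, hpair⟩ := exists_pairing K'₁ K'₂ h0₁ h0₂ hcard
  have hE₁ := hM₁.comp (hσ₁ 0 h0₁)
  have hE₂ := hM₂.comp (hσ₂ 0 h0₂)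
  exact plConnected_of_bridge hM₁ hE₁ hE₂ hM₂
    (fun _ hlam => rev_sub_le_rev_comb_comp hFV hM₁ hF₁ hσ₁ hE₁ hlam)
    (fun _ hlam => rev_sub_le_rev_comb_comp hFV hM₂ hF₂ hσ₂ hE₂ hlam)
    (exists_common_selected_comp hpair)

end RN
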